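/- For every λ ∈ (−1/2, 0) ∪ (0, ∞) and every integer n ≥ 2, ‖C_{n−2}^{(λ+1)}‖₂² = ((n² − 2λn)/(2⁴λ³))·[C_n^{(λ)}(1)]² + ((2n²(4λ−1) + n(4λ+1) + 2λ)/(2⁵λ³))·‖C_n^{(λ)}‖₂² − [C_n^{(λ)}(1)]²·((n+2λ)/(n+1))·((1−2λ)/(2⁵λ³)) − ((n+1)(2n+3)/(2⁵λ³))·‖C_{n+1}^{(λ)}‖₂². -/

import Mathlib

open Real MeasureTheory Finset

/-- Gegenbauer polynomials `C_n^{(λ)}`: `C_0 = 1`, `C_1 = 2λx`, and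
`n C_n(x) = 2(n+λ-1) x C_{n-1}(x) - (n+2λ-2) C_{n-2}(x)` for `n ≥ 2`. -/
noncomputable def gegenbauer (lam : ℝ) : ℕ → ℝ → ℝ
  | 0, _ => 1
  | 1, x => 2 * lam * x
  | n + 2, x =>
      (2 * ((n : ℝ) + 1 + lam) * x * gegenbauer lam (n + 1) x
        - ((n : ℝ) + 2 * lam) * gegenbauer lam n x) / ((n : ℝ) + 2)

lemma geg_rec (lam : ℝ) (n : ℕ) (x : ℝ) :
    ((n:ℝ)+2) * gegenbauer lam (n+2) x
      = 2*((n:ℝ)+1+lam)*x*gegenbauer lam (n+1) x - ((n:ℝ)+2*lam)*gegenbauer lam n x := by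
  have h : ((n:ℝ)+2) ≠ 0 := by positivity
  simp only [gegenbauer]
  field_simp

lemma geg_AB (lam : ℝ) (n : ℕ) (x : ℝ) :
    (2*lam*(x * gegenbauer (lam+1) (n+1) x - gegenbauer (lam+1) n x)
       = ((n:ℝ)+2) * gegenbauer lam (n+2) x)
    ∧ (2*lam*(gegenbauer (lam+1) (n+1) x - x * gegenbauer (lam+1) n x)
       = ((n:ℝ)+1+2*lam) * gegenbauer lam (n+1) x) := by
  induction n with
  | zero =>
    constructor
    · have h := geg_rec lam 0 x
      simp only [Nat.cast_zero] at h
      simp only [gegenbauer] at h ⊢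
      push_cast at h ⊢
      nlinarith [h]
    · simp only [gegenbauer]; push_cast; ring
  | succ k ih =>
    obtain ⟨ihA, ihB⟩ := ih
    have hk : ((k:ℝ)+2) ≠ 0 := by positivity
    have hD := geg_rec (lam+1) k x
    have hC := geg_rec lam (k+1) x
    push_cast at hC ⊢
    constructor
    · refine mul_left_cancel₀ hk ?_
      linear_combination (2*lam*x) * hD - ((k:ℝ)+2) * hC
        + (2*((k:ℝ)+2+lam)*x) * ihA - ((k:ℝ)+2) * ihB
    · refine mul_left_cancel₀ hk ?_
      linear_combination (2*lam) * hD + (((k:ℝ)+2+2*lam)) * ihA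

lemma geg_P8 (lam : ℝ) (n : ℕ) (x : ℝ) :
    2*lam*(gegenbauer (lam+1) (n+2) x - gegenbauer (lam+1) n x)
      = 2*((n:ℝ)+2+lam) * gegenbauer lam (n+2) x := by
  have hA := (geg_AB lam n x).1
  have hB := (geg_AB lam (n+1) x).2
  push_cast at hB
  linear_combination hA + hB

noncomputable def gegD (lam : ℝ) : ℕ → ℝ → ℝ
  | 0, _ => 0
  | n + 1, x => 2 * lam * gegenbauer (lam+1) n x

lemma gegD_id (lam : ℝ) (n : ℕ) (x : ℝ) :
    ((n:ℝ)+2) * gegD lam (n+2) x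
      = 2*((n:ℝ)+1+lam) * (gegenbauer lam (n+1) x + x * gegD lam (n+1) x)
        - ((n:ℝ)+2*lam) * gegD lam n x := by
  match n with
  | 0 =>
    simp only [gegD, gegenbauer]
    push_cast
    ring
  | Nat.succ k =>
    simp only [gegD]
    have hD := geg_rec (lam+1) k x
    have h8 := geg_P8 lam k x
    push_cast at hD h8 ⊢
    linear_combination (2*lam) * hD + h8

lemma geg_hasDerivAt (lam : ℝ) (n : ℕ) (x : ℝ) :
    HasDerivAt (gegenbauer lam n) (gegD lam n x) x := by
  induction n using Nat.twoStepInduction generalizing x with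
  | zero =>
    have : gegenbauer lam 0 = fun _ : ℝ => (1:ℝ) := rfl
    rw [this]; simpa [gegD] using hasDerivAt_const x (1:ℝ)
  | one =>
    have : gegenbauer lam 1 = fun y : ℝ => 2*lam*y := rfl
    rw [this]
    simpa [gegD, gegenbauer] using (hasDerivAt_id x).const_mul (2*lam)
  | more k ih1 ih2 =>
    have hfun : gegenbauer lam (k+2) = fun y : ℝ =>
        (2*((k:ℝ)+1+lam)*y*gegenbauer lam (k+1) y
          - ((k:ℝ)+2*lam)*gegenbauer lam k y)/((k:ℝ)+2) := rfl
    rw [hfun]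
    have h0 : HasDerivAt (fun y : ℝ => 2*((k:ℝ)+1+lam)*y) (2*((k:ℝ)+1+lam)) x := by
      simpa using (hasDerivAt_id x).const_mul (2*((k:ℝ)+1+lam))
    have h2 := ((h0.fun_mul (ih2 x)).fun_sub ((ih1 x).const_mul (((k:ℝ)+2*lam)))).div_const (((k:ℝ)+2))
    refine h2.congr_deriv (Eq.symm ?_)
    have hk : ((k:ℝ)+2) ≠ 0 := by positivity
    field_simp
    linear_combination gegD_id lam k x

lemma geg_cont (lam : ℝ) (n : ℕ) : Continuous (gegenbauer lam n) := by
  have : Differentiable ℝ (gegenbauer lam n) := fun x => (geg_hasDerivAt lam n x).differentiableAt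
  exact this.continuous

lemma gegD_E (lam : ℝ) (n : ℕ) (x : ℝ) :
    (1 - x^2) * gegD lam n x
      = ((n:ℝ)+2*lam)*x*gegenbauer lam n x - ((n:ℝ)+1)*gegenbauer lam (n+1) x := by
  match n with
  | 0 => simp only [gegD, gegenbauer]; push_cast; ring
  | Nat.succ k =>
    simp only [gegD]
    have hA := (geg_AB lam k x).1
    have hB := (geg_AB lam k x).2
    push_cast at hA hB ⊢
    linear_combination x * hB - hA

lemma geg_one (lam : ℝ) (k : ℕ) :
    ((k:ℝ)+1) * gegenbauer lam (k+1) 1 = ((k:ℝ)+2*lam) * gegenbauer lam k 1 := by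
  induction k with
  | zero => simp [gegenbauer]
  | succ k ih =>
    have h := geg_rec lam k 1
    push_cast
    linear_combination h + ih

lemma geg_zero (lam : ℝ) (k : ℕ) :
    gegenbauer lam k 0 * gegenbauer lam (k+1) 0 = 0 := by
  induction k with
  | zero => simp [gegenbauer]
  | succ k ih =>
    have h := geg_rec lam k 0
    have h2 : ((k:ℝ)+2)*(gegenbauer lam (k+1) 0 * gegenbauer lam (k+2) 0)
        = -((k:ℝ)+2*lam)*(gegenbauer lam k 0 * gegenbauer lam (k+1) 0) := by
      linear_combination (gegenbauer lam (k+1) 0) * h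
    rw [ih, mul_zero] at h2
    have hk : ((k:ℝ)+2) ≠ 0 := by positivity
    exact (mul_eq_zero.mp h2).resolve_left hk

lemma ftc01 (F f : ℝ → ℝ) (hF : ∀ x, HasDerivAt F (f x) x) (hf : Continuous f) :
    ∫ x in (0:ℝ)..1, f x = F 1 - F 0 :=
  intervalIntegral.integral_eq_sub_of_hasDerivAt (fun x _ => hF x) (hf.intervalIntegrable 0 1)

lemma isplit2 (a b : ℝ) (f g : ℝ → ℝ) (hf : Continuous f) (hg : Continuous g) :
    ∫ x in (0:ℝ)..1, (a * f x + b * g x)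
      = a * (∫ x in (0:ℝ)..1, f x) + b * (∫ x in (0:ℝ)..1, g x) := by
  rw [intervalIntegral.integral_add ((continuous_const.fun_mul hf).intervalIntegrable 0 1)
      ((continuous_const.fun_mul hg).intervalIntegrable 0 1),
    intervalIntegral.integral_const_mul, intervalIntegral.integral_const_mul]

lemma isplit3 (a b c : ℝ) (f g h : ℝ → ℝ) (hf : Continuous f) (hg : Continuous g)
    (hh : Continuous h) :
    ∫ x in (0:ℝ)..1, (a * f x + b * g x + c * h x)
      = a * (∫ x in (0:ℝ)..1, f x) + b * (∫ x in (0:ℝ)..1, g x)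
        + c * (∫ x in (0:ℝ)..1, h x) := by
  rw [intervalIntegral.integral_add (((continuous_const.fun_mul hf).fun_add (continuous_const.fun_mul hg)).intervalIntegrable 0 1)
      ((continuous_const.fun_mul hh).intervalIntegrable 0 1), isplit2 a b f g hf hg,
    intervalIntegral.integral_const_mul]


lemma cg2 (l : ℝ) (a : ℕ) : Continuous (fun x:ℝ => (gegenbauer l a x)^2) := (geg_cont l a).pow 2

lemma cgg0 (l1 l2 : ℝ) (a b : ℕ) :
    Continuous (fun x:ℝ => gegenbauer l1 a x * gegenbauer l2 b x) :=
  (geg_cont l1 a).mul (geg_cont l2 b)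

lemma cgg (l1 l2 : ℝ) (a b : ℕ) :
    Continuous (fun x:ℝ => x*(gegenbauer l1 a x * gegenbauer l2 b x)) :=
  continuous_id.mul (cgg0 l1 l2 a b)

lemma cx2 (l : ℝ) (a : ℕ) : Continuous (fun x:ℝ => x^2*(gegenbauer l a x)^2) :=
  (continuous_pow 2).mul (cg2 l a)


theorem gegenbauer_L2_norm_alt_recursion (lam : ℝ)
    (hlam : lam ∈ Set.Ioo (-(1/2) : ℝ) 0 ∪ Set.Ioi (0 : ℝ)) (n : ℕ) (hn : 2 ≤ n) :
    (∫ x in (0:ℝ)..1, (gegenbauer (lam + 1) (n - 2) x) ^ 2) =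
      (((n : ℝ) ^ 2 - 2 * lam * n) / (2 ^ 4 * lam ^ 3)) * (gegenbauer lam n 1) ^ 2
      + ((2 * (n : ℝ) ^ 2 * (4 * lam - 1) + (n : ℝ) * (4 * lam + 1) + 2 * lam)
            / (2 ^ 5 * lam ^ 3))
          * (∫ x in (0:ℝ)..1, (gegenbauer lam n x) ^ 2)
      - (gegenbauer lam n 1) ^ 2 * (((n : ℝ) + 2 * lam) / ((n : ℝ) + 1))
          * ((1 - 2 * lam) / (2 ^ 5 * lam ^ 3))
      - (((n : ℝ) + 1) * (2 * (n : ℝ) + 3) / (2 ^ 5 * lam ^ 3))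
          * (∫ x in (0:ℝ)..1, (gegenbauer lam (n + 1) x) ^ 2) := by
  have hl0 : lam ≠ 0 := by
    rcases hlam with h | h
    · exact ne_of_lt h.2
    · exact ne_of_gt h
  obtain ⟨m, rfl⟩ : ∃ m, n = m + 2 := ⟨n - 2, by omega⟩
  simp only [Nat.add_sub_cancel, show m+2+1 = m+3 from rfl]
  push_cast
  -- restated auxiliary pointwise facts
  have g1 : ((m:ℝ)+1+1) * gegenbauer lam (m+2) 1 = ((m:ℝ)+1+2*lam) * gegenbauer lam (m+1) 1 := by
    have h := geg_one lam (m+1); push_cast at h; exact h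
  have g2 : ((m:ℝ)+2+1) * gegenbauer lam (m+3) 1 = ((m:ℝ)+2+2*lam) * gegenbauer lam (m+2) 1 := by
    have h := geg_one lam (m+2); push_cast at h; exact h
  have z1 : gegenbauer lam (m+1) 0 * gegenbauer lam (m+2) 0 = 0 := geg_zero lam (m+1)
  have z2 : gegenbauer lam (m+2) 0 * gegenbauer lam (m+3) 0 = 0 := geg_zero lam (m+2)

  have e1 : (∫ x in (0:ℝ)..1, (gegenbauer lam (m+1) x)^2) + 4*lam*(∫ x in (0:ℝ)..1, x*(gegenbauer lam (m+1) x * gegenbauer (lam+1) m x)) = (gegenbauer lam (m+1) 1)^2 := by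
    have hF : ∀ x:ℝ, HasDerivAt (fun y:ℝ => y*(gegenbauer lam (m+1) y)^2)
        (((1:ℝ)) * ((gegenbauer lam (m+1) x)^2) + (4*lam) * (x*(gegenbauer lam (m+1) x * gegenbauer (lam+1) m x))) x := by
      intro x
      have hd : HasDerivAt (fun y:ℝ => y) (1:ℝ) x := hasDerivAt_id x
      have h := hd.fun_mul ((geg_hasDerivAt lam (m+1) x).fun_pow 2)
      refine h.congr_deriv (Eq.symm ?_)
      simp only [gegD]
      push_cast
      ring
    have h := ftc01 _ _ hF ((continuous_const.fun_mul (cg2 lam (m+1))).fun_add (continuous_const.fun_mul (cgg lam (lam+1) (m+1) m)))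
    rw [intervalIntegral.integral_add ((continuous_const.fun_mul (cg2 lam (m+1))).intervalIntegrable 0 1) ((continuous_const.fun_mul (cgg lam (lam+1) (m+1) m)).intervalIntegrable 0 1),
      intervalIntegral.integral_const_mul, intervalIntegral.integral_const_mul] at h
    linear_combination h

  have e1x : (∫ x in (0:ℝ)..1, (gegenbauer lam (m+2) x)^2) + 4*lam*(∫ x in (0:ℝ)..1, x*(gegenbauer lam (m+2) x * gegenbauer (lam+1) (m+1) x)) = (gegenbauer lam (m+2) 1)^2 := by
    have hF : ∀ x:ℝ, HasDerivAt (fun y:ℝ => y*(gegenbauer lam (m+2) y)^2)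
        (((1:ℝ)) * ((gegenbauer lam (m+2) x)^2) + (4*lam) * (x*(gegenbauer lam (m+2) x * gegenbauer (lam+1) (m+1) x))) x := by
      intro x
      have hd : HasDerivAt (fun y:ℝ => y) (1:ℝ) x := hasDerivAt_id x
      have h := hd.fun_mul ((geg_hasDerivAt lam (m+2) x).fun_pow 2)
      refine h.congr_deriv (Eq.symm ?_)
      simp only [gegD]
      push_cast
      ring
    have h := ftc01 _ _ hF ((continuous_const.fun_mul (cg2 lam (m+2))).fun_add (continuous_const.fun_mul (cgg lam (lam+1) (m+2) (m+1))))
    rw [intervalIntegral.integral_add ((continuous_const.fun_mul (cg2 lam (m+2))).intervalIntegrable 0 1) ((continuous_const.fun_mul (cgg lam (lam+1) (m+2) (m+1))).intervalIntegrable 0 1),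
      intervalIntegral.integral_const_mul, intervalIntegral.integral_const_mul] at h
    linear_combination h

  have e1xx : (∫ x in (0:ℝ)..1, (gegenbauer lam (m+3) x)^2) + 4*lam*(∫ x in (0:ℝ)..1, x*(gegenbauer lam (m+3) x * gegenbauer (lam+1) (m+2) x)) = (gegenbauer lam (m+3) 1)^2 := by
    have hF : ∀ x:ℝ, HasDerivAt (fun y:ℝ => y*(gegenbauer lam (m+3) y)^2)
        (((1:ℝ)) * ((gegenbauer lam (m+3) x)^2) + (4*lam) * (x*(gegenbauer lam (m+3) x * gegenbauer (lam+1) (m+2) x))) x := by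
      intro x
      have hd : HasDerivAt (fun y:ℝ => y) (1:ℝ) x := hasDerivAt_id x
      have h := hd.fun_mul ((geg_hasDerivAt lam (m+3) x).fun_pow 2)
      refine h.congr_deriv (Eq.symm ?_)
      simp only [gegD]
      push_cast
      ring
    have h := ftc01 _ _ hF ((continuous_const.fun_mul (cg2 lam (m+3))).fun_add (continuous_const.fun_mul (cgg lam (lam+1) (m+3) (m+2))))
    rw [intervalIntegral.integral_add ((continuous_const.fun_mul (cg2 lam (m+3))).intervalIntegrable 0 1) ((continuous_const.fun_mul (cgg lam (lam+1) (m+3) (m+2))).intervalIntegrable 0 1),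
      intervalIntegral.integral_const_mul, intervalIntegral.integral_const_mul] at h
    linear_combination h

  have e2 : 2*lam*(∫ x in (0:ℝ)..1, gegenbauer (lam+1) m x * gegenbauer lam (m+2) x) + 2*lam*(∫ x in (0:ℝ)..1, gegenbauer lam (m+1) x * gegenbauer (lam+1) (m+1) x) = gegenbauer lam (m+1) 1 * gegenbauer lam (m+2) 1 := by
    have hF : ∀ x:ℝ, HasDerivAt (fun y:ℝ => gegenbauer lam (m+1) y * gegenbauer lam (m+2) y)
        ((2*lam) * (gegenbauer (lam+1) m x * gegenbauer lam (m+2) x) + (2*lam) * (gegenbauer lam (m+1) x * gegenbauer (lam+1) (m+1) x)) x := by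
      intro x
      have h := (geg_hasDerivAt lam (m+1) x).fun_mul (geg_hasDerivAt lam (m+2) x)
      refine h.congr_deriv (Eq.symm ?_)
      simp only [gegD]
      ring
    have h := ftc01 _ _ hF ((continuous_const.fun_mul (cgg0 (lam+1) lam m (m+2))).fun_add (continuous_const.fun_mul (cgg0 lam (lam+1) (m+1) (m+1))))
    rw [intervalIntegral.integral_add ((continuous_const.fun_mul (cgg0 (lam+1) lam m (m+2))).intervalIntegrable 0 1) ((continuous_const.fun_mul (cgg0 lam (lam+1) (m+1) (m+1))).intervalIntegrable 0 1),
      intervalIntegral.integral_const_mul, intervalIntegral.integral_const_mul] at h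
    linear_combination h - z1

  have e2x : 2*lam*(∫ x in (0:ℝ)..1, gegenbauer (lam+1) (m+1) x * gegenbauer lam (m+3) x) + 2*lam*(∫ x in (0:ℝ)..1, gegenbauer lam (m+2) x * gegenbauer (lam+1) (m+2) x) = gegenbauer lam (m+2) 1 * gegenbauer lam (m+3) 1 := by
    have hF : ∀ x:ℝ, HasDerivAt (fun y:ℝ => gegenbauer lam (m+2) y * gegenbauer lam (m+3) y)
        ((2*lam) * (gegenbauer (lam+1) (m+1) x * gegenbauer lam (m+3) x) + (2*lam) * (gegenbauer lam (m+2) x * gegenbauer (lam+1) (m+2) x)) x := by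
      intro x
      have h := (geg_hasDerivAt lam (m+2) x).fun_mul (geg_hasDerivAt lam (m+3) x)
      refine h.congr_deriv (Eq.symm ?_)
      simp only [gegD]
      ring
    have h := ftc01 _ _ hF ((continuous_const.fun_mul (cgg0 (lam+1) lam (m+1) (m+3))).fun_add (continuous_const.fun_mul (cgg0 lam (lam+1) (m+2) (m+2))))
    rw [intervalIntegral.integral_add ((continuous_const.fun_mul (cgg0 (lam+1) lam (m+1) (m+3))).intervalIntegrable 0 1) ((continuous_const.fun_mul (cgg0 lam (lam+1) (m+2) (m+2))).intervalIntegrable 0 1),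
      intervalIntegral.integral_const_mul, intervalIntegral.integral_const_mul] at h
    linear_combination h - z2

  have e3 : (∫ x in (0:ℝ)..1, (gegenbauer (lam+1) m x)^2) + (2*(m:ℝ)+4*lam+1)*(∫ x in (0:ℝ)..1, x^2*(gegenbauer (lam+1) m x)^2) - 2*((m:ℝ)+1)*(∫ x in (0:ℝ)..1, x*(gegenbauer (lam+1) m x * gegenbauer (lam+1) (m+1) x)) = 0 := by
    have hF : ∀ x:ℝ, HasDerivAt (fun y:ℝ => (y - y^3)*(gegenbauer (lam+1) m y)^2)
        ((1:ℝ) * ((gegenbauer (lam+1) m x)^2) + (2*(m:ℝ)+4*lam+1) * (x^2*(gegenbauer (lam+1) m x)^2) + (-(2*((m:ℝ)+1))) * (x*(gegenbauer (lam+1) m x * gegenbauer (lam+1) (m+1) x))) x := by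
      intro x
      have hp : HasDerivAt (fun y:ℝ => y - y^3) (1 - 3*x^2) x := by
        have h := (hasDerivAt_id x).fun_sub (hasDerivAt_pow 3 x)
        refine h.congr_deriv (Eq.symm ?_)
        all_goals push_cast; ring
      have h := hp.fun_mul ((geg_hasDerivAt (lam+1) m x).fun_pow 2)
      refine h.congr_deriv (Eq.symm ?_)
      have hE := gegD_E (lam+1) m x
      push_cast
      linear_combination (-(2*x*(gegenbauer (lam+1) m x))) * hE
    have h := ftc01 _ _ hF (((continuous_const.fun_mul (cg2 (lam+1) m)).fun_add
        (continuous_const.fun_mul (cx2 (lam+1) m))).fun_add (continuous_const.fun_mul (cgg (lam+1) (lam+1) m (m+1))))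
    rw [intervalIntegral.integral_add (((continuous_const.fun_mul (cg2 (lam+1) m)).fun_add
          (continuous_const.fun_mul (cx2 (lam+1) m))).intervalIntegrable 0 1) ((continuous_const.fun_mul (cgg (lam+1) (lam+1) m (m+1))).intervalIntegrable 0 1),
      intervalIntegral.integral_add ((continuous_const.fun_mul (cg2 (lam+1) m)).intervalIntegrable 0 1) ((continuous_const.fun_mul (cx2 (lam+1) m)).intervalIntegrable 0 1),
      intervalIntegral.integral_const_mul, intervalIntegral.integral_const_mul,
      intervalIntegral.integral_const_mul] at h
    linear_combination h

  have e4 : 2*lam*(∫ x in (0:ℝ)..1, x*(gegenbauer (lam+1) m x * gegenbauer (lam+1) (m+1) x)) = ((m:ℝ)+2)*(∫ x in (0:ℝ)..1, gegenbauer (lam+1) m x * gegenbauer lam (m+2) x) + 2*lam*(∫ x in (0:ℝ)..1, (gegenbauer (lam+1) m x)^2) := by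
    have h : (∫ x in (0:ℝ)..1, (2*lam) * (x*(gegenbauer (lam+1) m x * gegenbauer (lam+1) (m+1) x)))
        = ∫ x in (0:ℝ)..1, (((m:ℝ)+2) * (gegenbauer (lam+1) m x * gegenbauer lam (m+2) x) + (2*lam) * ((gegenbauer (lam+1) m x)^2)) := by
      refine intervalIntegral.integral_congr fun x _ => ?_
      have hA := (geg_AB lam m x).1
      linear_combination (gegenbauer (lam+1) m x) * hA
    rw [intervalIntegral.integral_const_mul,
      intervalIntegral.integral_add ((continuous_const.fun_mul (cgg0 (lam+1) lam m (m+2))).intervalIntegrable 0 1) ((continuous_const.fun_mul (cg2 (lam+1) m)).intervalIntegrable 0 1),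
      intervalIntegral.integral_const_mul, intervalIntegral.integral_const_mul] at h
    linear_combination h

  have e5 : 2*lam*(∫ x in (0:ℝ)..1, (gegenbauer (lam+1) m x)^2) - 2*lam*(∫ x in (0:ℝ)..1, x^2*(gegenbauer (lam+1) m x)^2) = ((m:ℝ)+1+2*lam)*(∫ x in (0:ℝ)..1, x*(gegenbauer lam (m+1) x * gegenbauer (lam+1) m x)) - ((m:ℝ)+2)*(∫ x in (0:ℝ)..1, gegenbauer (lam+1) m x * gegenbauer lam (m+2) x) := by
    have h : (∫ x in (0:ℝ)..1, ((2*lam) * ((gegenbauer (lam+1) m x)^2) + (-(2*lam)) * (x^2*(gegenbauer (lam+1) m x)^2)))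
        = ∫ x in (0:ℝ)..1, ((((m:ℝ)+1+2*lam)) * (x*(gegenbauer lam (m+1) x * gegenbauer (lam+1) m x)) + (-((m:ℝ)+2)) * (gegenbauer (lam+1) m x * gegenbauer lam (m+2) x)) := by
      refine intervalIntegral.integral_congr fun x _ => ?_
      have hE : (1 - x^2)*(2*lam*gegenbauer (lam+1) m x)
          = ((m:ℝ)+1+2*lam)*x*gegenbauer lam (m+1) x - ((m:ℝ)+1+1)*gegenbauer lam (m+2) x := by
        have h2 := gegD_E lam (m+1) x
        simp only [gegD] at h2
        push_cast at h2
        exact h2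
      linear_combination (gegenbauer (lam+1) m x) * hE
    rw [intervalIntegral.integral_add ((continuous_const.fun_mul (cg2 (lam+1) m)).intervalIntegrable 0 1) ((continuous_const.fun_mul (cx2 (lam+1) m)).intervalIntegrable 0 1),
      intervalIntegral.integral_add ((continuous_const.fun_mul (cgg lam (lam+1) (m+1) m)).intervalIntegrable 0 1) ((continuous_const.fun_mul (cgg0 (lam+1) lam m (m+2))).intervalIntegrable 0 1),
      intervalIntegral.integral_const_mul, intervalIntegral.integral_const_mul,
      intervalIntegral.integral_const_mul, intervalIntegral.integral_const_mul] at h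
    linear_combination h

  have e6 : 2*lam*(∫ x in (0:ℝ)..1, gegenbauer lam (m+1) x * gegenbauer (lam+1) (m+1) x) - 2*lam*(∫ x in (0:ℝ)..1, x*(gegenbauer lam (m+1) x * gegenbauer (lam+1) m x)) = ((m:ℝ)+1+2*lam)*(∫ x in (0:ℝ)..1, (gegenbauer lam (m+1) x)^2) := by
    have h : (∫ x in (0:ℝ)..1, ((2*lam) * (gegenbauer lam (m+1) x * gegenbauer (lam+1) (m+1) x) + (-(2*lam)) * (x*(gegenbauer lam (m+1) x * gegenbauer (lam+1) m x))))
        = ∫ x in (0:ℝ)..1, ((m:ℝ)+1+2*lam) * ((gegenbauer lam (m+1) x)^2) := by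
      refine intervalIntegral.integral_congr fun x _ => ?_
      have hB := (geg_AB lam m x).2
      linear_combination (gegenbauer lam (m+1) x) * hB
    rw [intervalIntegral.integral_add ((continuous_const.fun_mul (cgg0 lam (lam+1) (m+1) (m+1))).intervalIntegrable 0 1) ((continuous_const.fun_mul (cgg lam (lam+1) (m+1) m)).intervalIntegrable 0 1),
      intervalIntegral.integral_const_mul, intervalIntegral.integral_const_mul,
      intervalIntegral.integral_const_mul] at h
    linear_combination h

  have e6x : 2*lam*(∫ x in (0:ℝ)..1, gegenbauer lam (m+2) x * gegenbauer (lam+1) (m+2) x) - 2*lam*(∫ x in (0:ℝ)..1, x*(gegenbauer lam (m+2) x * gegenbauer (lam+1) (m+1) x)) = ((m:ℝ)+2+2*lam)*(∫ x in (0:ℝ)..1, (gegenbauer lam (m+2) x)^2) := by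
    have h : (∫ x in (0:ℝ)..1, ((2*lam) * (gegenbauer lam (m+2) x * gegenbauer (lam+1) (m+2) x) + (-(2*lam)) * (x*(gegenbauer lam (m+2) x * gegenbauer (lam+1) (m+1) x))))
        = ∫ x in (0:ℝ)..1, ((m:ℝ)+2+2*lam) * ((gegenbauer lam (m+2) x)^2) := by
      refine intervalIntegral.integral_congr fun x _ => ?_
      have hB : 2*lam*(gegenbauer (lam+1) (m+2) x - x*gegenbauer (lam+1) (m+1) x)
          = ((m:ℝ)+1+1+2*lam)*gegenbauer lam (m+2) x := by
        have h2 := (geg_AB lam (m+1) x).2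
        push_cast at h2
        exact h2
      linear_combination (gegenbauer lam (m+2) x) * hB
    rw [intervalIntegral.integral_add ((continuous_const.fun_mul (cgg0 lam (lam+1) (m+2) (m+2))).intervalIntegrable 0 1) ((continuous_const.fun_mul (cgg lam (lam+1) (m+2) (m+1))).intervalIntegrable 0 1),
      intervalIntegral.integral_const_mul, intervalIntegral.integral_const_mul,
      intervalIntegral.integral_const_mul] at h
    linear_combination h

  have e6xx : 2*lam*(∫ x in (0:ℝ)..1, gegenbauer lam (m+3) x * gegenbauer (lam+1) (m+3) x) - 2*lam*(∫ x in (0:ℝ)..1, x*(gegenbauer lam (m+3) x * gegenbauer (lam+1) (m+2) x)) = ((m:ℝ)+3+2*lam)*(∫ x in (0:ℝ)..1, (gegenbauer lam (m+3) x)^2) := by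
    have h : (∫ x in (0:ℝ)..1, ((2*lam) * (gegenbauer lam (m+3) x * gegenbauer (lam+1) (m+3) x) + (-(2*lam)) * (x*(gegenbauer lam (m+3) x * gegenbauer (lam+1) (m+2) x))))
        = ∫ x in (0:ℝ)..1, ((m:ℝ)+3+2*lam) * ((gegenbauer lam (m+3) x)^2) := by
      refine intervalIntegral.integral_congr fun x _ => ?_
      have hB : 2*lam*(gegenbauer (lam+1) (m+3) x - x*gegenbauer (lam+1) (m+2) x)
          = ((m:ℝ)+2+1+2*lam)*gegenbauer lam (m+3) x := by
        have h2 := (geg_AB lam (m+2) x).2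
        push_cast at h2
        exact h2
      linear_combination (gegenbauer lam (m+3) x) * hB
    rw [intervalIntegral.integral_add ((continuous_const.fun_mul (cgg0 lam (lam+1) (m+3) (m+3))).intervalIntegrable 0 1) ((continuous_const.fun_mul (cgg lam (lam+1) (m+3) (m+2))).intervalIntegrable 0 1),
      intervalIntegral.integral_const_mul, intervalIntegral.integral_const_mul,
      intervalIntegral.integral_const_mul] at h
    linear_combination h

  have e7 : 2*lam*(∫ x in (0:ℝ)..1, gegenbauer lam (m+2) x * gegenbauer (lam+1) (m+2) x) - 2*lam*(∫ x in (0:ℝ)..1, gegenbauer (lam+1) m x * gegenbauer lam (m+2) x) = 2*((m:ℝ)+2+lam)*(∫ x in (0:ℝ)..1, (gegenbauer lam (m+2) x)^2) := by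
    have h : (∫ x in (0:ℝ)..1, ((2*lam) * (gegenbauer lam (m+2) x * gegenbauer (lam+1) (m+2) x) + (-(2*lam)) * (gegenbauer (lam+1) m x * gegenbauer lam (m+2) x)))
        = ∫ x in (0:ℝ)..1, (2*((m:ℝ)+2+lam)) * ((gegenbauer lam (m+2) x)^2) := by
      refine intervalIntegral.integral_congr fun x _ => ?_
      have h8 := geg_P8 lam m x
      linear_combination (gegenbauer lam (m+2) x) * h8
    rw [intervalIntegral.integral_add ((continuous_const.fun_mul (cgg0 lam (lam+1) (m+2) (m+2))).intervalIntegrable 0 1) ((continuous_const.fun_mul (cgg0 (lam+1) lam m (m+2))).intervalIntegrable 0 1),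
      intervalIntegral.integral_const_mul, intervalIntegral.integral_const_mul,
      intervalIntegral.integral_const_mul] at h
    linear_combination h

  have e7x : 2*lam*(∫ x in (0:ℝ)..1, gegenbauer lam (m+3) x * gegenbauer (lam+1) (m+3) x) - 2*lam*(∫ x in (0:ℝ)..1, gegenbauer (lam+1) (m+1) x * gegenbauer lam (m+3) x) = 2*((m:ℝ)+3+lam)*(∫ x in (0:ℝ)..1, (gegenbauer lam (m+3) x)^2) := by
    have h : (∫ x in (0:ℝ)..1, ((2*lam) * (gegenbauer lam (m+3) x * gegenbauer (lam+1) (m+3) x) + (-(2*lam)) * (gegenbauer (lam+1) (m+1) x * gegenbauer lam (m+3) x)))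
        = ∫ x in (0:ℝ)..1, (2*((m:ℝ)+3+lam)) * ((gegenbauer lam (m+3) x)^2) := by
      refine intervalIntegral.integral_congr fun x _ => ?_
      have h8 : 2*lam*(gegenbauer (lam+1) (m+3) x - gegenbauer (lam+1) (m+1) x)
          = 2*((m:ℝ)+1+2+lam)*gegenbauer lam (m+3) x := by
        have h2 := geg_P8 lam (m+1) x
        push_cast at h2
        exact h2
      linear_combination (gegenbauer lam (m+3) x) * h8
    rw [intervalIntegral.integral_add ((continuous_const.fun_mul (cgg0 lam (lam+1) (m+3) (m+3))).intervalIntegrable 0 1) ((continuous_const.fun_mul (cgg0 (lam+1) lam (m+1) (m+3))).intervalIntegrable 0 1),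
      intervalIntegral.integral_const_mul, intervalIntegral.integral_const_mul,
      intervalIntegral.integral_const_mul] at h
    linear_combination h

  have S2 : 8*lam^2*(∫ x in (0:ℝ)..1, (gegenbauer (lam+1) m x)^2)
      = (2*(m:ℝ)+4*lam+1)*((m:ℝ)+1+2*lam)*(∫ x in (0:ℝ)..1, x*(gegenbauer lam (m+1) x * gegenbauer (lam+1) m x)) + ((m:ℝ)+2)*(1-4*lam)*(∫ x in (0:ℝ)..1, gegenbauer (lam+1) m x * gegenbauer lam (m+2) x) := by
    linear_combination (2*lam)*e3 + (2*((m:ℝ)+1))*e4 + (2*(m:ℝ)+4*lam+1)*e5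
  have S3 : 4*lam*(∫ x in (0:ℝ)..1, gegenbauer (lam+1) m x * gegenbauer lam (m+2) x) = (gegenbauer lam (m+2) 1)^2 - (2*(m:ℝ)+5)*(∫ x in (0:ℝ)..1, (gegenbauer lam (m+2) x)^2) := by
    linear_combination e1x + 2*e6x - 2*e7
  have S4 : 4*lam*(∫ x in (0:ℝ)..1, gegenbauer (lam+1) (m+1) x * gegenbauer lam (m+3) x) = (gegenbauer lam (m+3) 1)^2 - (2*(m:ℝ)+7)*(∫ x in (0:ℝ)..1, (gegenbauer lam (m+3) x)^2) := by
    linear_combination e1xx + 2*e6xx - 2*e7x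
  have S7 : 4*lam*(∫ x in (0:ℝ)..1, gegenbauer (lam+1) m x * gegenbauer lam (m+2) x) = 2*(gegenbauer lam (m+1) 1)*(gegenbauer lam (m+2) 1) - (gegenbauer lam (m+1) 1)^2 - (2*(m:ℝ)+4*lam+1)*(∫ x in (0:ℝ)..1, (gegenbauer lam (m+1) x)^2) := by
    linear_combination 2*e2 - 2*e6 - e1
  have hXp : ((m:ℝ)+3)^2*(2*(m:ℝ)+7)*(∫ x in (0:ℝ)..1, (gegenbauer lam (m+3) x)^2)
      = (1-2*lam)^2*(gegenbauer lam (m+2) 1)^2 + ((m:ℝ)+3)^2*(2*(m:ℝ)+4*lam+3)*(∫ x in (0:ℝ)..1, (gegenbauer lam (m+2) x)^2) := by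
    linear_combination ((m:ℝ)+3)^2*(S4 - 2*e2x + 2*e7 + S3)
      + ((((m:ℝ)+2+1)*(gegenbauer lam (m+3) 1) - ((m:ℝ)+2+2*lam)*(gegenbauer lam (m+2) 1)) - 2*(1-2*lam)*(gegenbauer lam (m+2) 1))*g2
  have HJp : 32*lam^3*(∫ x in (0:ℝ)..1, (gegenbauer (lam+1) m x)^2)
      = 2*((m:ℝ)+2)^2*(gegenbauer lam (m+2) 1)^2 - 2*((m:ℝ)+2)*(gegenbauer lam (m+2) 1)^2
        + (((m:ℝ)+1+2*lam)+((m:ℝ)+2)*(1-4*lam))*((gegenbauer lam (m+2) 1)^2 - (2*(m:ℝ)+5)*(∫ x in (0:ℝ)..1, (gegenbauer lam (m+2) x)^2)) := by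
    linear_combination (4*lam)*S2 + ((m:ℝ)+1+2*lam)*(2*(m:ℝ)+4*lam+1)*e1
      - ((m:ℝ)+1+2*lam)*S7 + (((m:ℝ)+2)*(1-4*lam)+((m:ℝ)+1+2*lam))*S3
      + (2*(gegenbauer lam (m+2) 1) - 2*(((m:ℝ)+1+2*lam)*(gegenbauer lam (m+1) 1) + ((m:ℝ)+1+1)*(gegenbauer lam (m+2) 1)))*g1
  have hm37 : (((m:ℝ)+3)^2*(2*(m:ℝ)+7)) ≠ 0 := by positivity
  have h32 : (32*lam^3) ≠ 0 := by
    simp only [mul_ne_zero_iff]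
    exact ⟨by norm_num, pow_ne_zero 3 hl0⟩
  have hAJ : (∫ x in (0:ℝ)..1, (gegenbauer (lam+1) m x)^2)
      = (2*((m:ℝ)+2)^2*(gegenbauer lam (m+2) 1)^2 - 2*((m:ℝ)+2)*(gegenbauer lam (m+2) 1)^2
        + (((m:ℝ)+1+2*lam)+((m:ℝ)+2)*(1-4*lam))*((gegenbauer lam (m+2) 1)^2 - (2*(m:ℝ)+5)*(∫ x in (0:ℝ)..1, (gegenbauer lam (m+2) x)^2)))
        / (32*lam^3) := by
    rw [eq_div_iff h32]
    linear_combination HJp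
  have hIW : (∫ x in (0:ℝ)..1, (gegenbauer lam (m+3) x)^2)
      = ((1-2*lam)^2*(gegenbauer lam (m+2) 1)^2 + ((m:ℝ)+3)^2*(2*(m:ℝ)+4*lam+3)*(∫ x in (0:ℝ)..1, (gegenbauer lam (m+2) x)^2))
        / (((m:ℝ)+3)^2*(2*(m:ℝ)+7)) := by
    rw [eq_div_iff hm37]
    linear_combination hXp
  rw [hAJ, hIW]
  have hm3 : ((m:ℝ)+2+1) ≠ 0 := by positivity
  field_simp
  ring
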